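/- Assume strict feasibility, i.e., Pmax·∑_k b_k > η, and that h_1 ≥ h_2 ≥ … ≥ h_K > 0. Let ℓ ∈ {1, …, K}, α^(ℓ) = (1/Pmax)·( (∑_{k ≥ ℓ} h_k) / (σ²/Pmax + ∑_{k ≥ ℓ} h_k²) )², and let x^(ℓ) be defined by x^(ℓ)_k = 1/h_k² for k ≤ ℓ−1 and x^(ℓ)_k = α^(ℓ)·Pmax for k ≥ ℓ, and suppose 1/h_k² ≤ α^(ℓ)·Pmax for all k ≤ ℓ−1 and α^(ℓ)·Pmax ≤ 1/h_k² for all k ≥ ℓ. If this point additionally satisfies the sensing constraint ∑_k b_k·x^(ℓ)_k ≥ η·α^(ℓ), then (x^(ℓ), α^(ℓ)) is a global minimizer of (P2). -/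
import Mathlib


open Finset

/-- Objective of problem (P2). -/
noncomputable def objP2 (K : ℕ) (h : Fin K → ℝ) (σ2 : ℝ)
    (x : Fin K → ℝ) (α : ℝ) : ℝ :=
  ∑ k, (h k) ^ 2 * x k - 2 * ∑ k, h k * Real.sqrt (x k) + α * σ2

/-- Feasibility for problem (P2). -/
def FeasP2 (K : ℕ) (b : Fin K → ℝ) (η Pmax : ℝ)
    (x : Fin K → ℝ) (α : ℝ) : Prop :=
  (∑ k, b k * x k) ≥ η * α ∧ (∀ k, 0 ≤ x k ∧ x k ≤ Pmax * α) ∧ 0 < α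

/-- The candidate scaling factor `α^(ℓ)`. -/
noncomputable def alphaL (K : ℕ) (h : Fin K → ℝ) (σ2 Pmax : ℝ) (ℓ : Fin K) : ℝ :=
  (1 / Pmax) *
    ((∑ k ∈ Finset.univ.filter (fun k => ℓ ≤ k), h k) /
      (σ2 / Pmax + ∑ k ∈ Finset.univ.filter (fun k => ℓ ≤ k), (h k) ^ 2)) ^ 2

/-- The candidate power-allocation point `x^(ℓ)`. -/
noncomputable def xL (K : ℕ) (h : Fin K → ℝ) (σ2 Pmax : ℝ) (ℓ : Fin K) :
    Fin K → ℝ :=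
  fun k => if k < ℓ then 1 / (h k) ^ 2 else alphaL K h σ2 Pmax ℓ * Pmax

set_option maxHeartbeats 1000000 in
theorem stmt_9 (K : ℕ) (hK : 1 ≤ K) (h b : Fin K → ℝ)
    (hh : ∀ k, 0 < h k) (hb : ∀ k, 0 < b k)
    (σ2 η Pmax : ℝ) (hσ : 0 < σ2) (hη : 0 < η) (hP : 0 < Pmax)
    (hstrict : Pmax * ∑ k, b k > η)
    (hsorted : ∀ i j : Fin K, i ≤ j → h j ≤ h i)
    (ℓ : Fin K)
    (hlow : ∀ k, k < ℓ → 1 / (h k) ^ 2 ≤ alphaL K h σ2 Pmax ℓ * Pmax)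
    (hhigh : ∀ k, ℓ ≤ k → alphaL K h σ2 Pmax ℓ * Pmax ≤ 1 / (h k) ^ 2)
    (hsens : (∑ k, b k * xL K h σ2 Pmax ℓ k) ≥ η * alphaL K h σ2 Pmax ℓ) :
    FeasP2 K b η Pmax (xL K h σ2 Pmax ℓ) (alphaL K h σ2 Pmax ℓ) ∧
    ∀ (y : Fin K → ℝ) (β : ℝ), FeasP2 K b η Pmax y β →
      objP2 K h σ2 (xL K h σ2 Pmax ℓ) (alphaL K h σ2 Pmax ℓ) ≤
        objP2 K h σ2 y β := by
  set S1 := ∑ k ∈ Finset.univ.filter (fun k : Fin K => ℓ ≤ k), h k with hS1def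
  set S2 := ∑ k ∈ Finset.univ.filter (fun k : Fin K => ℓ ≤ k), (h k) ^ 2 with hS2def
  have hmem : ℓ ∈ Finset.univ.filter (fun k : Fin K => ℓ ≤ k) := by simp
  have hS1pos : 0 < S1 := Finset.sum_pos (fun i _ => hh i) ⟨ℓ, hmem⟩
  set D := σ2 / Pmax + S2 with hDdef
  have hDpos : 0 < D := by
    have : (0:ℝ) ≤ S2 := Finset.sum_nonneg (fun i _ => sq_nonneg _)
    have : 0 < σ2 / Pmax := by positivity
    rw [hDdef]; linarith [Finset.sum_nonneg (fun i (_ : i ∈ Finset.univ.filter (fun k : Fin K => ℓ ≤ k)) => sq_nonneg (h i))]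
  set s := S1 / D with hsdef
  have hspos : 0 < s := div_pos hS1pos hDpos
  set α := alphaL K h σ2 Pmax ℓ with hα
  have hαeq : α = s ^ 2 / Pmax := by
    rw [hα]; simp only [alphaL]
    rw [hsdef, hDdef, hS1def, hS2def]; ring
  have hαpos : 0 < α := by rw [hαeq]; positivity
  have hxs : α * Pmax = s ^ 2 := by rw [hαeq]; field_simp
  have hslope : s * D = S1 := div_mul_cancel₀ _ hDpos.ne'
  have hfeas : FeasP2 K b η Pmax (xL K h σ2 Pmax ℓ) α := by
    refine ⟨hsens, fun k => ?_, hαpos⟩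
    by_cases hk : k < ℓ
    · simp only [xL, if_pos hk]
      have hhk := hh k
      constructor
      · positivity
      · have := hlow k hk; linarith
    · simp only [xL, if_neg hk]
      constructor
      · nlinarith
      · linarith [mul_comm α Pmax]
  refine ⟨hfeas, ?_⟩
  intro y β hyβ
  obtain ⟨_, hybd, hβpos⟩ := hyβ
  set t := Real.sqrt (Pmax * β) with htdef
  have ht0 : 0 ≤ t := Real.sqrt_nonneg _
  have ht2 : t ^ 2 = Pmax * β := Real.sq_sqrt (by positivity)
  have hxs' : alphaL K h σ2 Pmax ℓ * Pmax = s ^ 2 := hxs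
  have hsqrt_high : Real.sqrt (alphaL K h σ2 Pmax ℓ * Pmax) = s := by
    rw [hxs', Real.sqrt_sq hspos.le]
  have hcand : objP2 K h σ2 (xL K h σ2 Pmax ℓ) α
      = ∑ k, (if k < ℓ then (-1 : ℝ) else (h k) ^ 2 * s ^ 2 - 2 * h k * s) + α * σ2 := by
    rw [objP2, Finset.mul_sum, ← Finset.sum_sub_distrib]
    congr 1
    apply Finset.sum_congr rfl
    intro k _
    by_cases hk : k < ℓ
    · simp only [xL, if_pos hk]
      have hne := (hh k).ne'
      rw [show (1 : ℝ) / (h k) ^ 2 = (1 / h k) ^ 2 by field_simp]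
      rw [Real.sqrt_sq (one_div_pos.mpr (hh k)).le]
      field_simp
      norm_num
    · simp only [xL, if_neg hk, hsqrt_high]
      rw [hxs']; ring
  have hmain : ∀ k : Fin K,
      (if k < ℓ then (-1 : ℝ) else (h k) ^ 2 * s ^ 2 - 2 * h k * s)
        + (if k < ℓ then (0 : ℝ) else 2 * (h k) ^ 2 * s - 2 * h k) * (t - s)
      ≤ (h k) ^ 2 * y k - 2 * (h k * Real.sqrt (y k)) := by
    intro k
    obtain ⟨hy0, hy1⟩ := hybd k
    set u := Real.sqrt (y k) with hu
    have hu0 : 0 ≤ u := Real.sqrt_nonneg _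
    have hu2 : u ^ 2 = y k := Real.sq_sqrt hy0
    have hut : u ≤ t := by
      rw [htdef, hu]
      exact Real.sqrt_le_sqrt hy1
    have hhk := hh k
    rw [← hu2]
    by_cases hk : k < ℓ
    · simp only [if_pos hk]
      nlinarith [sq_nonneg (h k * u - 1)]
    · simp only [if_neg hk]
      have hbound := hhigh k (le_of_not_gt hk)
      rw [hxs] at hbound
      have h2 : (h k) ^ 2 * s ^ 2 ≤ 1 := by
        have := mul_le_mul_of_nonneg_left hbound (sq_nonneg (h k))
        have hne : (h k) ^ 2 ≠ 0 := by positivity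
        calc (h k) ^ 2 * s ^ 2 ≤ (h k) ^ 2 * (1 / (h k) ^ 2) := this
          _ = 1 := by field_simp
      have hs1 : h k * s ≤ 1 := by nlinarith [mul_pos hhk hspos]
      nlinarith [sq_nonneg (u - s), mul_nonneg (sub_nonneg.mpr hut) (sub_nonneg.mpr hs1)]
  have hdsum : ∑ k : Fin K, (if k < ℓ then (0 : ℝ) else 2 * (h k) ^ 2 * s - 2 * h k)
      = 2 * s * S2 - 2 * S1 := by
    have e0 : ∀ k : Fin K, (if k < ℓ then (0 : ℝ) else 2 * (h k) ^ 2 * s - 2 * h k)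
        = (if ℓ ≤ k then 2 * (h k) ^ 2 * s - 2 * h k else 0) := by
      intro k
      by_cases hk : k < ℓ
      · rw [if_pos hk, if_neg (not_le.mpr hk)]
      · rw [if_neg hk, if_pos (le_of_not_gt hk)]
    rw [Finset.sum_congr rfl (fun k _ => e0 k), ← Finset.sum_filter]
    rw [hS1def, hS2def, Finset.mul_sum, Finset.mul_sum, ← Finset.sum_sub_distrib]
    apply Finset.sum_congr rfl
    intro k _; ring
  have hobj_y : objP2 K h σ2 y β
      = ∑ k, ((h k) ^ 2 * y k - 2 * (h k * Real.sqrt (y k))) + β * σ2 := by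
    rw [objP2, Finset.mul_sum, ← Finset.sum_sub_distrib]
  have hsum : ∑ k : Fin K, ((if k < ℓ then (-1 : ℝ) else (h k) ^ 2 * s ^ 2 - 2 * h k * s)
        + (if k < ℓ then (0 : ℝ) else 2 * (h k) ^ 2 * s - 2 * h k) * (t - s))
      ≤ ∑ k, ((h k) ^ 2 * y k - 2 * (h k * Real.sqrt (y k))) :=
    Finset.sum_le_sum (fun k _ => hmain k)
  rw [Finset.sum_add_distrib, ← Finset.sum_mul, hdsum] at hsum
  have hβσ : α * σ2 + (2 * s * (σ2 / Pmax)) * (t - s) ≤ β * σ2 := by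
    have hq : s ^ 2 + 2 * s * (t - s) ≤ t ^ 2 := by nlinarith [sq_nonneg (t - s)]
    have hβt : β = t ^ 2 / Pmax := by rw [ht2]; field_simp
    rw [hβt, hαeq]
    have hP' : (0:ℝ) < σ2 / Pmax := by positivity
    have key := mul_le_mul_of_nonneg_left hq hP'.le
    have e1 : s ^ 2 / Pmax * σ2 = σ2 / Pmax * s ^ 2 := by ring
    have e2 : t ^ 2 / Pmax * σ2 = σ2 / Pmax * t ^ 2 := by ring
    nlinarith [key]
  rw [hcand, hobj_y]
  have h0 : 2 * s * S2 - 2 * S1 + 2 * s * (σ2 / Pmax) = 0 := by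
    rw [← hslope, hDdef]; ring
  have hzero : (2 * s * S2 - 2 * S1) * (t - s) + (2 * s * (σ2 / Pmax)) * (t - s) = 0 := by
    linear_combination (t - s) * h0
  linarith [hsum, hβσ, hzero]
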